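/- Let P, Q be probability distributions on ℝ with densities g_V and g_W on [0,1] with respect to Lebesgue measure satisfying g_V(z) = g_W(1 − z) for almost every z ∈ [0,1], and let U be the uniform distribution on [0,1] (density 1). Then for any convex function φ : [0, ∞) → ℝ with φ(1) = 0, the f-divergences agree: ∫₀¹ φ(g_V(z)) dz = ∫₀¹ φ(g_W(z)) dz, i.e., D_φ(V ‖ U) = D_φ(W ‖ U). Consequently the quantile-transformation-induced f-divergence D̃_φ^{QT}(P‖Q) is invariant under common affine transformations x ↦ ax + b (a ≠ 0) of both distributions. -/
import Mathlib


open MeasureTheory Set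

lemma refl_setIntegral (h : ℝ → ℝ) :
    ∫ z in Icc (0 : ℝ) 1, h (1 - z) = ∫ z in Icc (0 : ℝ) 1, h z := by
  have hpre : (fun z : ℝ => 1 - z) ⁻¹' Icc (0 : ℝ) 1 = Icc (0 : ℝ) 1 := by
    ext x
    simp only [Set.mem_preimage, Set.mem_Icc]
    constructor <;> (intro h'; constructor <;> linarith [h'.1, h'.2])
  have mp : MeasurePreserving (fun z : ℝ => 1 - z) volume volume :=
    Measure.measurePreserving_sub_left volume 1
  have := mp.setIntegral_preimage_emb (MeasurableEquiv.subLeft (1:ℝ)).measurableEmbedding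
    h (Icc (0:ℝ) 1)
  rw [hpre] at this
  exact this

lemma refl_rnDeriv_integral (φ : ℝ → ℝ) (μ : Measure ℝ) [IsFiniteMeasure μ] :
    ∫ z in Icc (0:ℝ) 1,
        φ (((Measure.map (fun u : ℝ => 1 - u) μ).rnDeriv volume z).toReal)
      = ∫ z in Icc (0:ℝ) 1, φ ((μ.rnDeriv volume z).toReal) := by
  have hemb : MeasurableEmbedding (fun u : ℝ => 1 - u) :=
    (MeasurableEquiv.subLeft (1:ℝ)).measurableEmbedding
  have hkey := hemb.rnDeriv_map μ volume
  rw [(Measure.measurePreserving_sub_left volume 1).map_eq] at hkey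
  calc ∫ z in Icc (0:ℝ) 1,
        φ (((Measure.map (fun u : ℝ => 1 - u) μ).rnDeriv volume z).toReal)
      = ∫ z in Icc (0:ℝ) 1,
        φ (((Measure.map (fun u : ℝ => 1 - u) μ).rnDeriv volume (1 - z)).toReal) :=
        (refl_setIntegral _).symm
    _ = ∫ z in Icc (0:ℝ) 1, φ ((μ.rnDeriv volume z).toReal) := by
        refine integral_congr_ae (ae_restrict_of_ae ?_)
        filter_upwards [hkey] with x hx
        rw [hx]

/-- Let `P, Q` be probability distributions on `ℝ` with densities `gV, gW` on `[0, 1]`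
satisfying `gV z = gW (1 - z)` for a.e. `z ∈ [0, 1]`, and let `U` be the uniform
distribution on `[0, 1]` (density `1`). Then for any convex `φ : [0,∞) → ℝ` with
`φ 1 = 0` the f-divergences agree: `∫₀¹ φ (gV z) dz = ∫₀¹ φ (gW z) dz`, i.e.
`D_φ(V ‖ U) = D_φ(W ‖ U)`. Consequently the quantile-transformation-induced f-divergence
`D̃_φ^{QT}(P‖Q) = D_φ(Q_P^{QT} ‖ U)` is invariant under common affine transformations
`x ↦ a x + b` (`a ≠ 0`) of both distributions. -/
theorem fdiv_reflection_invariance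
    (P Q : Measure ℝ) [IsProbabilityMeasure P] [IsProbabilityMeasure Q]
    (gV gW : ℝ → ℝ)
    (hP : P = volume.withDensity
      (fun z => ENNReal.ofReal (indicator (Icc (0 : ℝ) 1) gV z)))
    (hQ : Q = volume.withDensity
      (fun z => ENNReal.ofReal (indicator (Icc (0 : ℝ) 1) gW z)))
    (hrefl : ∀ᵐ z ∂(volume.restrict (Icc (0 : ℝ) 1)), gV z = gW (1 - z))
    (φ : ℝ → ℝ) (hconv : ConvexOn ℝ (Ici (0 : ℝ)) φ) (hφ1 : φ 1 = 0) :
    (∫ z in Icc (0 : ℝ) 1, φ (gV z) = ∫ z in Icc (0 : ℝ) 1, φ (gW z)) ∧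
    (∀ (P₀ Q₀ : Measure ℝ), IsProbabilityMeasure P₀ → IsProbabilityMeasure Q₀ →
      (∀ y : ℝ, Q₀ {y} = 0) →
      ∀ a b : ℝ, a ≠ 0 →
      ∀ FY G : ℝ → ℝ,
        (∀ x, FY x = (Q₀ (Iic x)).toReal) →
        (∀ t, G t = ((Measure.map (fun y => a * y + b) Q₀) (Iic t)).toReal) →
        ∫ z in Icc (0 : ℝ) 1,
            φ (((Measure.map (fun x => G (a * x + b)) P₀).rnDeriv volume z).toReal) =
          ∫ z in Icc (0 : ℝ) 1,
            φ (((Measure.map (fun x => FY x) P₀).rnDeriv volume z).toReal)) := by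
  constructor
  · -- first part: reflection invariance of the integral
    have h1 : ∫ z in Icc (0 : ℝ) 1, φ (gV z) = ∫ z in Icc (0 : ℝ) 1, φ (gW (1 - z)) := by
      refine integral_congr_ae ?_
      filter_upwards [hrefl] with z hz
      rw [hz]
    rw [h1]
    exact refl_setIntegral (fun z => φ (gW z))
  · intro P₀ Q₀ hP₀ hQ₀ hatom a b ha FY G hFY hG
    have haff : Measurable (fun y : ℝ => a * y + b) :=
      (measurable_id.const_mul a).add_const b
    have hmapQ : ∀ t, (Measure.map (fun y => a * y + b) Q₀) (Iic t)
        = Q₀ ((fun y => a * y + b) ⁻¹' Iic t) :=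
      fun t => Measure.map_apply haff measurableSet_Iic
    have hFYmono : Monotone FY := by
      intro x y hxy
      rw [hFY x, hFY y]
      exact ENNReal.toReal_mono (measure_ne_top _ _) (measure_mono (Iic_subset_Iic.2 hxy))
    have hFYm : Measurable FY := hFYmono.measurable
    rcases lt_or_gt_of_ne ha with hneg | hpos
    · -- a < 0 : G (a x + b) = 1 - FY x
      have hGx : ∀ x, G (a * x + b) = 1 - FY x := by
        intro x
        have hpre : (fun y => a * y + b) ⁻¹' Iic (a * x + b) = Ici x := by
          ext y
          simp only [Set.mem_preimage, Set.mem_Iic, Set.mem_Ici]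
          constructor <;> intro h'
          · nlinarith
          · nlinarith
        have hIicIio : Q₀ (Iic x) = Q₀ (Iio x) := by
          rw [← Iio_union_right, measure_union (by simp) (measurableSet_singleton x),
            hatom x, add_zero]
        have hcompl : Q₀ (Ici x) = 1 - Q₀ (Iic x) := by
          rw [← compl_Iio, measure_compl measurableSet_Iio (measure_ne_top _ _),
            measure_univ, hIicIio]
        rw [hG, hmapQ, hpre, hcompl, hFY,
          ENNReal.toReal_sub_of_le prob_le_one ENNReal.one_ne_top, ENNReal.toReal_one]
      have hfun : (fun x => G (a * x + b)) = fun x => 1 - FY x := funext hGx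
      have hcomp : Measure.map (fun x => G (a * x + b)) P₀
          = Measure.map (fun u : ℝ => 1 - u) (Measure.map FY P₀) := by
        rw [hfun, show (fun x => 1 - FY x) = (fun u : ℝ => 1 - u) ∘ FY from rfl]
        exact (Measure.map_map (g := fun u : ℝ => 1 - u) (by fun_prop) hFYm).symm
      have : IsProbabilityMeasure (Measure.map FY P₀) :=
        Measure.isProbabilityMeasure_map hFYm.aemeasurable
      rw [hcomp]
      exact refl_rnDeriv_integral φ (Measure.map FY P₀)
    · -- a > 0 : G (a x + b) = FY x
      have hGx : ∀ x, G (a * x + b) = FY x := by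
        intro x
        have hpre : (fun y => a * y + b) ⁻¹' Iic (a * x + b) = Iic x := by
          ext y
          simp only [Set.mem_preimage, Set.mem_Iic]
          constructor <;> intro h'
          · nlinarith
          · nlinarith
        rw [hG, hmapQ, hpre, hFY]
      have hfun : (fun x => G (a * x + b)) = fun x => FY x := funext hGx
      rw [hfun]
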